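/- Let G be an affine algebraic group with Hopf 2-cocycle J, and let p ∈ O(G) be a primitive element. Then for all α ∈ O(G), R^J(p, α) = (J − J₂₁)(p, α) = (J₂₁⁻¹ − J⁻¹)(p, α), where R^J := J₂₁⁻¹ * J. -/

import Mathlib

open TensorProduct

noncomputable section

/-- Convolution product of two `ℂ`-valued functionals on a `ℂ`-coalgebra. -/
def conv {C : Type} [AddCommGroup C] [Module ℂ C] [Coalgebra ℂ C]
    (f g : C →ₗ[ℂ] ℂ) : C →ₗ[ℂ] ℂ :=
  LinearMap.mul' ℂ ℂ ∘ₗ TensorProduct.map f g ∘ₗ Coalgebra.comul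

variable {H : Type} [CommRing H] [HopfAlgebra ℂ H]

/-- `a ⊗ b ⊗ c ↦ Σ J(a₁b₁ ⊗ c) J(a₂ ⊗ b₂)`. -/
def cocycleLHS (J : H ⊗[ℂ] H →ₗ[ℂ] ℂ) : (H ⊗[ℂ] H) ⊗[ℂ] H →ₗ[ℂ] ℂ :=
  conv (J ∘ₗ TensorProduct.map (LinearMap.mul' ℂ H) LinearMap.id)
    (LinearMap.mul' ℂ ℂ ∘ₗ TensorProduct.map J Coalgebra.counit)

/-- `a ⊗ b ⊗ c ↦ Σ J(a ⊗ b₁c₁) J(b₂ ⊗ c₂)`. -/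
def cocycleRHS (J : H ⊗[ℂ] H →ₗ[ℂ] ℂ) : (H ⊗[ℂ] H) ⊗[ℂ] H →ₗ[ℂ] ℂ :=
  conv (J ∘ₗ TensorProduct.map LinearMap.id (LinearMap.mul' ℂ H)
        ∘ₗ (TensorProduct.assoc ℂ H H H).toLinearMap)
    (LinearMap.mul' ℂ ℂ ∘ₗ TensorProduct.map Coalgebra.counit J
        ∘ₗ (TensorProduct.assoc ℂ H H H).toLinearMap)

/-- A Hopf 2-cocycle for `H`: a convolution-invertible functional on `H ⊗ H` satisfying
`Σ J(a₁b₁, c) J(a₂, b₂) = Σ J(a, b₁c₁) J(b₂, c₂)` and `J(a,1) = ε(a) = J(1,a)`. -/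
structure IsHopf2Cocycle (J : H ⊗[ℂ] H →ₗ[ℂ] ℂ) : Prop where
  invertible : ∃ J' : H ⊗[ℂ] H →ₗ[ℂ] ℂ,
    conv J J' = Coalgebra.counit ∧ conv J' J = Coalgebra.counit
  cocycle : cocycleLHS J = cocycleRHS J
  norm_right : ∀ a : H, J (a ⊗ₜ[ℂ] (1 : H)) = Coalgebra.counit a
  norm_left : ∀ a : H, J ((1 : H) ⊗ₜ[ℂ] a) = Coalgebra.counit a

/-!
For a primitive `p`, the coproduct of `p ⊗ α` in `H ⊗ H` is
`Σ (p ⊗ α₁) ⊗ (1 ⊗ α₂) + (1 ⊗ α₁) ⊗ (p ⊗ α₂)`. Hence, if `f` and `g` both restrict to the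
counit on `1 ⊗ H`, the counit being the unit for convolution gives
`(f * g)(p ⊗ α) = f(p ⊗ α) + g(p ⊗ α)`, and symmetrically on `α ⊗ p`. The convolution inverse
of the normalized cocycle `J` is again normalized, so this applies to `R^J = J₂₁⁻¹ * J`, giving
`R^J(p, α) = J⁻¹(α, p) + J(p, α)`, and to `J * J⁻¹ = ε`, which vanishes on `p ⊗ α` and `α ⊗ p`
because `ε(p) = 0`; that is, `J⁻¹ = -J` there.
-/

open Coalgebra

section

variable {A B : Type} [AddCommGroup A] [Module ℂ A] [Coalgebra ℂ A]
  [AddCommGroup B] [Module ℂ B] [Coalgebra ℂ B]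

lemma conv_counit_left (f : A →ₗ[ℂ] ℂ) : conv counit f = f := by
  ext a
  simpa [conv, LinearMap.convOne_def] using
    congr(WithConv.ofConv $(one_mul (WithConv.toConv f)) a)

lemma conv_counit_right (f : A →ₗ[ℂ] ℂ) : conv f counit = f := by
  ext a
  simpa [conv, LinearMap.convOne_def] using
    congr(WithConv.ofConv $(mul_one (WithConv.toConv f)) a)

lemma conv_comp_coalgHom (f g : B →ₗ[ℂ] ℂ) (φ : A →ₗc[ℂ] B) :
    conv (f ∘ₗ φ.toLinearMap) (g ∘ₗ φ.toLinearMap) = conv f g ∘ₗ φ.toLinearMap :=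
  (LinearMap.convMul_comp_coalgHom_distrib (WithConv.toConv f) (WithConv.toConv g) φ).symm

lemma conv_tmul_eq_sum (f g : A ⊗[ℂ] B →ₗ[ℂ] ℂ) {a : A} {ι : Type} (s : Finset ι)
    (x y : ι → A) (ha : comul (R := ℂ) a = ∑ i ∈ s, x i ⊗ₜ y i) (b : B) :
    conv f g (a ⊗ₜ b) =
      ∑ i ∈ s, conv (f ∘ₗ mk ℂ A B (x i)) (g ∘ₗ mk ℂ A B (y i)) b := by
  obtain r := ℛ ℂ b
  have hab : comul (R := ℂ) (a ⊗ₜ[ℂ] b) = ∑ i ∈ s, ∑ j ∈ r.index,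
      (x i ⊗ₜ[ℂ] r.left j) ⊗ₜ[ℂ] (y i ⊗ₜ[ℂ] r.right j) := by
    rw [TensorProduct.comul_tmul, ha, ← r.eq]
    simp [TensorProduct.sum_tmul, TensorProduct.tmul_sum]
    exact Finset.sum_comm
  simp [conv, hab, ← r.eq]

end

namespace Bialgebra

variable (R : Type) {A : Type} [CommRing R] [Semiring A] [Bialgebra R A]

def IsPrimitive (p : A) : Prop :=
  comul (R := R) p = p ⊗ₜ[R] (1 : A) + (1 : A) ⊗ₜ[R] p

variable {R}

lemma IsPrimitive.counit_eq_zero {p : A} (hp : IsPrimitive R p) : counit (R := R) p = 0 := by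
  have h := congr(counit (R := R) (TensorProduct.lid R A $(Coalgebra.rTensor_counit_comul p)))
  rw [hp] at h
  simpa using h

end Bialgebra

open Bialgebra

section

variable {A B : Type} [Ring A] [Bialgebra ℂ A] [AddCommGroup B] [Module ℂ B] [Coalgebra ℂ B]

lemma conv_one_tmul (f g : A ⊗[ℂ] B →ₗ[ℂ] ℂ) (b : B) :
    conv f g ((1 : A) ⊗ₜ b) = conv (f ∘ₗ mk ℂ A B 1) (g ∘ₗ mk ℂ A B 1) b := by
  simpa using conv_tmul_eq_sum f g {()} (fun _ => (1 : A)) (fun _ => 1)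
    (by simp [Algebra.TensorProduct.one_def]) b

lemma apply_one_tmul_of_conv_eq_counit {f g : A ⊗[ℂ] B →ₗ[ℂ] ℂ} (h : conv f g = counit)
    (hf : ∀ b, f ((1 : A) ⊗ₜ b) = counit b) (b : B) : g ((1 : A) ⊗ₜ b) = counit b := by
  have hf' : f ∘ₗ mk ℂ A B 1 = counit := LinearMap.ext hf
  have hb := congr($h ((1 : A) ⊗ₜ b))
  rw [conv_one_tmul, hf', conv_counit_left] at hb
  simpa using hb

lemma conv_primitive_tmul (f g : A ⊗[ℂ] B →ₗ[ℂ] ℂ) {p : A} (hp : IsPrimitive ℂ p)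
    (hf : ∀ b, f ((1 : A) ⊗ₜ b) = counit b) (hg : ∀ b, g ((1 : A) ⊗ₜ b) = counit b) (b : B) :
    conv f g (p ⊗ₜ b) = f (p ⊗ₜ b) + g (p ⊗ₜ b) := by
  have hf' : f ∘ₗ mk ℂ A B 1 = counit := LinearMap.ext hf
  have hg' : g ∘ₗ mk ℂ A B 1 = counit := LinearMap.ext hg
  rw [conv_tmul_eq_sum f g Finset.univ ![p, 1] ![1, p] (by rw [Fin.sum_univ_two]; exact hp)]
  simp [Fin.sum_univ_two, hf', hg', conv_counit_left, conv_counit_right]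

end

section

variable {A B : Type} [Ring A] [Bialgebra ℂ A] [Ring B] [Bialgebra ℂ B]

def commCoalgHom : B ⊗[ℂ] A →ₗc[ℂ] A ⊗[ℂ] B :=
  (Bialgebra.TensorProduct.comm ℂ B A).toCoalgEquiv.toCoalgHom

@[simp]
lemma commCoalgHom_tmul (b : B) (a : A) : commCoalgHom (b ⊗ₜ[ℂ] a) = a ⊗ₜ[ℂ] b :=
  rfl

lemma apply_tmul_one_of_conv_eq_counit {f g : A ⊗[ℂ] B →ₗ[ℂ] ℂ} (h : conv f g = counit)
    (hf : ∀ a, f (a ⊗ₜ (1 : B)) = counit a) (a : A) : g (a ⊗ₜ (1 : B)) = counit a := by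
  have h' : conv (f ∘ₗ commCoalgHom.toLinearMap) (g ∘ₗ commCoalgHom.toLinearMap) = counit := by
    rw [conv_comp_coalgHom, h, commCoalgHom.counit_comp]
  simpa using apply_one_tmul_of_conv_eq_counit h' (by simpa using hf) a

lemma conv_tmul_primitive (f g : A ⊗[ℂ] B →ₗ[ℂ] ℂ) {p : B} (hp : IsPrimitive ℂ p)
    (hf : ∀ a, f (a ⊗ₜ (1 : B)) = counit a) (hg : ∀ a, g (a ⊗ₜ (1 : B)) = counit a) (a : A) :
    conv f g (a ⊗ₜ p) = f (a ⊗ₜ p) + g (a ⊗ₜ p) := by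
  have h := conv_primitive_tmul (f ∘ₗ commCoalgHom.toLinearMap) (g ∘ₗ commCoalgHom.toLinearMap)
    hp (by simpa using hf) (by simpa using hg) a
  rw [conv_comp_coalgHom] at h
  simpa using h

end

theorem RJ_on_primitive (J Jinv : H ⊗[ℂ] H →ₗ[ℂ] ℂ)
    (hJ : IsHopf2Cocycle J)
    (hinv : conv J Jinv = Coalgebra.counit ∧ conv Jinv J = Coalgebra.counit)
    (p : H) (hp : Coalgebra.comul (R := ℂ) p = p ⊗ₜ[ℂ] (1 : H) + (1 : H) ⊗ₜ[ℂ] p) :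
    let RJ : H ⊗[ℂ] H →ₗ[ℂ] ℂ :=
      conv (Jinv ∘ₗ (TensorProduct.comm ℂ H H).toLinearMap) J
    ∀ α : H,
      RJ (p ⊗ₜ[ℂ] α) = J (p ⊗ₜ[ℂ] α) - J (α ⊗ₜ[ℂ] p)
      ∧ RJ (p ⊗ₜ[ℂ] α) = Jinv (α ⊗ₜ[ℂ] p) - Jinv (p ⊗ₜ[ℂ] α) := by
  intro RJ α
  have hprim : IsPrimitive ℂ p := hp
  have hJinv_left := apply_one_tmul_of_conv_eq_counit hinv.1 hJ.norm_left
  have hJinv_right := apply_tmul_one_of_conv_eq_counit hinv.1 hJ.norm_right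
  have hRJ : RJ (p ⊗ₜ α) = Jinv (α ⊗ₜ p) + J (p ⊗ₜ α) :=
    conv_primitive_tmul _ J hprim hJinv_right hJ.norm_left α
  have hJp : J (p ⊗ₜ α) + Jinv (p ⊗ₜ α) = 0 := by
    rw [← conv_primitive_tmul J Jinv hprim hJ.norm_left hJinv_left, hinv.1]
    simp [hprim.counit_eq_zero]
  have hpJ : J (α ⊗ₜ p) + Jinv (α ⊗ₜ p) = 0 := by
    rw [← conv_tmul_primitive J Jinv hprim hJ.norm_right hJinv_right, hinv.1]
    simp [hprim.counit_eq_zero]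
  exact ⟨by linear_combination hRJ + hpJ, by linear_combination hRJ + hJp⟩
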